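/- arXiv:1401.5736 — 2 statements merged into one kernel-verified Lean document; each statement's English description precedes it below -/
import Mathlib

section
/- For any integers r and s with r ≥ 1 and s ≥ 0, there exists a matrix M in SL(2,ℤ) such that the Smith normal form of M - I has diagonal entries (elementary divisors) r and r·s. -/
open Matrix

namespace SL2SmithForm

variable {R : Type*} [CommRing R] (r s : R)

/-- `M - 1 = !![0, -r; r * s, -r² s]`: the row operation `row₂ -= r s • row₁` clears the corner
`-r² s`, and a quarter turn of the columns then gives `diag(r, r s)`. -/
def witness : Matrix (Fin 2) (Fin 2) R := !![1, -r; r * s, 1 - r ^ 2 * s]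

theorem det_witness : (witness r s).det = 1 := by
  simp [witness, det_fin_two_of]
  ring

theorem witness_sub_one : witness r s - 1 = !![0, -r; r * s, -(r ^ 2 * s)] := by
  ext i j
  fin_cases i <;> fin_cases j <;> simp [witness]

theorem rowOp_mul_witness_sub_one_mul_quarterTurn :
    !![1, 0; -(r * s), 1] * (witness r s - 1) * !![0, 1; -1, 0] = diagonal ![r, r * s] := by
  rw [witness_sub_one]
  simp [diagonal_fin_two]
  ring

end SL2SmithForm

theorem stmt_2_general (r s : ℤ) :
    ∃ M P Q : Matrix (Fin 2) (Fin 2) ℤ,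
      M.det = 1 ∧ IsUnit P.det ∧ IsUnit Q.det ∧
      P * (M - 1) * Q = Matrix.diagonal ![r, r * s] :=
  ⟨SL2SmithForm.witness r s, !![1, 0; -(r * s), 1], !![0, 1; -1, 0],
    SL2SmithForm.det_witness r s,
    by simp [det_fin_two_of], by simp [det_fin_two_of],
    SL2SmithForm.rowOp_mul_witness_sub_one_mul_quarterTurn r s⟩

theorem stmt_2 (r s : ℤ) (hr : 1 ≤ r) (hs : 0 ≤ s) :
    ∃ M P Q : Matrix (Fin 2) (Fin 2) ℤ,
      M.det = 1 ∧ IsUnit P.det ∧ IsUnit Q.det ∧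
      P * (M - 1) * Q = Matrix.diagonal ![r, r * s] :=
  stmt_2_general r s
end

section
/- In any sequence of n independent fair coin flips, let R_n denote the length of the longest run of heads. Then for every ε > 0, the probability that R_n ≥ (1+ε) log₂ n tends to 0 as n → ∞. (Upper bound half of the Erdős–Rényi law of long runs.) -/
/-!
A sequence of `n` flips with a run of `k` heads is determined by the start of the run
(`n + 1` choices) and the `n - k` flips outside it, so at most `(n + 1) 2^(n-k)` sequences have
such a run. For `k ≥ (1 + ε) log₂ n` this is a fraction at most `(n + 1) / n^(1+ε) ≤ 2 n^(-ε)`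
of all `2^n` sequences.
-/

/-- `hasHeadsRun n f k` : the sequence of coin flips `f` (where `true` = heads)
contains a run of at least `k` consecutive heads. -/
def hasHeadsRun (n : ℕ) (f : Fin n → Bool) (k : ℕ) : Prop :=
  ∃ i, ∃ h : i + k ≤ n, ∀ j : Fin k, f ⟨i + j, by omega⟩ = true

lemma hasHeadsRun_iff {n k : ℕ} {f : Fin n → Bool} :
    hasHeadsRun n f k ↔ ∃ i, i + k ≤ n ∧ ∀ m : Fin n, i ≤ m → m < i + k → f m = true := by
  refine exists_congr fun i => ⟨fun ⟨hi, hf⟩ => ⟨hi, fun m him hmi => ?_⟩,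
    fun ⟨hi, hf⟩ => ⟨hi, fun j => hf _ (by simp) (by simp)⟩⟩
  simpa [Nat.add_sub_cancel' him] using hf ⟨m - i, by omega⟩

def skipBlock (n k i : ℕ) (j : Fin (n - k)) : Fin n :=
  if (j : ℕ) < i then ⟨j, by omega⟩ else ⟨j + k, by omega⟩

lemma mem_block_or_mem_range_skipBlock {n k i : ℕ} (hi : i + k ≤ n) (m : Fin n) :
    (i ≤ m ∧ (m : ℕ) < i + k) ∨ m ∈ Set.range (skipBlock n k i) := by
  by_cases hmi : (m : ℕ) < i
  · exact .inr ⟨⟨m, by omega⟩, by simp [skipBlock, hmi]⟩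
  by_cases hmk : (m : ℕ) < i + k
  · exact .inl ⟨by omega, hmk⟩
  refine .inr ⟨⟨m - k, by omega⟩, ?_⟩
  simp only [skipBlock, if_neg (show ¬ (m : ℕ) - k < i by omega)]
  ext
  exact Nat.sub_add_cancel (by omega)

lemma eq_of_comp_skipBlock_eq {n k i : ℕ} (hi : i + k ≤ n) {f g : Fin n → Bool}
    (hf : ∀ m : Fin n, i ≤ m → m < i + k → f m = true)
    (hg : ∀ m : Fin n, i ≤ m → m < i + k → g m = true)
    (h : f ∘ skipBlock n k i = g ∘ skipBlock n k i) : f = g := by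
  funext m
  rcases mem_block_or_mem_range_skipBlock hi m with ⟨him, hmi⟩ | ⟨j, rfl⟩
  · rw [hf m him hmi, hg m him hmi]
  · exact congrFun h j

noncomputable def runEncoding (n k : ℕ) :
    {f : Fin n → Bool // hasHeadsRun n f k} → Fin (n + 1) × (Fin (n - k) → Bool) :=
  fun f =>
    have h := hasHeadsRun_iff.1 f.2
    (⟨h.choose, by omega⟩, f.1 ∘ skipBlock n k h.choose)

lemma runEncoding_injective (n k : ℕ) : Function.Injective (runEncoding n k) := by
  rintro ⟨f, hf⟩ ⟨g, hg⟩ h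
  obtain ⟨hstart, hrest⟩ := Prod.ext_iff.1 h
  have hfi := (hasHeadsRun_iff.1 hf).choose_spec
  have hgi := (hasHeadsRun_iff.1 hg).choose_spec
  simp only [runEncoding, Fin.mk.injEq] at hstart hrest
  rw [← hstart] at hgi hrest
  exact Subtype.ext (eq_of_comp_skipBlock_eq hfi.1 hfi.2 hgi.2 hrest)

lemma card_hasHeadsRun_mul_two_pow_le (n k : ℕ) :
    Nat.card {f : Fin n → Bool // hasHeadsRun n f k} * 2 ^ k ≤ (n + 1) * 2 ^ n := by
  rcases le_or_gt k n with hkn | hnk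
  · have hcard := Nat.card_le_card_of_injective _ (runEncoding_injective n k)
    simp only [Nat.card_eq_fintype_card, Fintype.card_prod, Fintype.card_fin,
      Fintype.card_fun, Fintype.card_bool] at hcard ⊢
    calc _ ≤ (n + 1) * 2 ^ (n - k) * 2 ^ k := Nat.mul_le_mul_right _ hcard
      _ = (n + 1) * 2 ^ n := by rw [mul_assoc, ← pow_add, Nat.sub_add_cancel hkn]
  · have : IsEmpty {f : Fin n → Bool // hasHeadsRun n f k} :=
      ⟨fun ⟨_, _, hi, _⟩ => by omega⟩
    simp

lemma rpow_le_two_pow_ceil_mul_logb {x : ℝ} (hx : 0 < x) (c : ℝ) :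
    x ^ c ≤ 2 ^ ⌈c * Real.logb 2 x⌉₊ := by
  calc x ^ c = 2 ^ (c * Real.logb 2 x) := by
        rw [mul_comm, Real.rpow_mul zero_le_two, Real.rpow_logb two_pos (by norm_num) hx]
    _ ≤ 2 ^ (⌈c * Real.logb 2 x⌉₊ : ℝ) :=
        Real.rpow_le_rpow_of_exponent_le one_le_two (Nat.le_ceil _)
    _ = _ := Real.rpow_natCast _ _

theorem stmt_11 (ε : ℝ) (hε : 0 < ε) :
    Filter.Tendsto
      (fun n : ℕ =>
        (Nat.card {f : Fin n → Bool // hasHeadsRun n f ⌈(1 + ε) * Real.logb 2 n⌉₊} : ℝ)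
          / 2 ^ n)
      Filter.atTop (nhds 0) := by
  have hlim : Filter.Tendsto (fun n : ℕ => 2 * (n : ℝ) ^ (-ε)) Filter.atTop (nhds 0) := by
    simpa using ((tendsto_rpow_neg_atTop hε).comp tendsto_natCast_atTop_atTop).const_mul 2
  refine squeeze_zero' (.of_forall fun n => by positivity) ?_ hlim
  filter_upwards [Filter.eventually_ge_atTop 1] with n hn
  set k := ⌈(1 + ε) * Real.logb 2 n⌉₊
  have hn0 : (0 : ℝ) < n := by exact_mod_cast hn
  have hcard : (Nat.card {f : Fin n → Bool // hasHeadsRun n f k} : ℝ) * 2 ^ k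
      ≤ (n + 1) * 2 ^ n := by exact_mod_cast card_hasHeadsRun_mul_two_pow_le n k
  calc (Nat.card {f : Fin n → Bool // hasHeadsRun n f k} : ℝ) / 2 ^ n
      ≤ (n + 1) / 2 ^ k := by
        rw [div_le_div_iff₀ (by positivity) (by positivity)]; linarith
    _ ≤ 2 * n / (n : ℝ) ^ (1 + ε) :=
        div_le_div₀ (by positivity) (by linarith [(Nat.one_le_cast (α := ℝ)).2 hn])
          (by positivity) (rpow_le_two_pow_ceil_mul_logb hn0 _)
    _ = 2 * (n : ℝ) ^ (-ε) := by
        rw [mul_div_assoc, show -ε = 1 - (1 + ε) by ring, Real.rpow_sub hn0, Real.rpow_one]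
end
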